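/- arXiv:math/0011078 — 4 statements merged into one kernel-verified Lean document; each statement's English description precedes it below -/
import Mathlib

section
/- Let a, b be real numbers with a < b and let f : ℝ → ℝ be continuous on the interval [a, b]. Then the integral of f over [a, b] equals (b - a) times the sum of the exhaustion series: ∫_a^b f(x) dx = (b - a) ∑_{n=1}^{∞} ∑_{m=1}^{2^n - 1} (-1)^{m+1} 2^{-n} f(a + m(b-a)/2^n), where the outer series over n converges. -/
/-!
The `n`-th term of the exhaustion series is the difference of the interior dyadic sums
`Q N = 2⁻ᴺ ∑_{0 < m < 2ᴺ} f (a + m (b - a) / 2ᴺ)` at levels `n` and `n - 1`: the odd nodes of level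
`n` are new, while the even ones already occur at level `n - 1` with twice the weight. So the
partial sums telescope to `Q N`, which is `(b - a)⁻¹` times the left Riemann sum of `f` for the
uniform partition into `2ᴺ` pieces, up to the vanishing term `f a / 2ᴺ`. Riemann sums of a
continuous function converge to its integral by uniform continuity.
-/

open Finset Filter intervalIntegral MeasureTheory Topology

theorem abs_mul_sub_integral_le {f : ℝ → ℝ} {x y c ε : ℝ}
    (hf : IntervalIntegrable f volume x y) (h : ∀ t ∈ Set.uIoc x y, |f t - c| ≤ ε) :
    |(y - x) * c - ∫ t in x..y, f t| ≤ ε * |y - x| := by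
  rw [← smul_eq_mul, ← intervalIntegral.integral_const (c := c),
    ← integral_sub intervalIntegrable_const hf]
  refine (Real.norm_eq_abs _).ge.trans (norm_integral_le_of_norm_le_const fun t ht => ?_)
  rw [Real.norm_eq_abs, abs_sub_comm]
  exact h t ht

theorem abs_sum_mul_sub_integral_le {f : ℝ → ℝ} {x : ℕ → ℝ} {n : ℕ} {ε : ℝ} (hx : Monotone x)
    (hf : IntervalIntegrable f volume (x 0) (x n))
    (hosc : ∀ k < n, ∀ t ∈ Set.Icc (x k) (x (k + 1)), |f t - f (x k)| ≤ ε) :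
    |∑ k ∈ range n, (x (k + 1) - x k) * f (x k) - ∫ t in x 0..x n, f t| ≤ ε * (x n - x 0) := by
  have hpiece : ∀ k < n, IntervalIntegrable f volume (x k) (x (k + 1)) :=
    fun k hk => hf.mono_set <| Set.uIcc_subset_uIcc
      (Set.mem_uIcc_of_le (hx k.zero_le) (hx hk.le))
      (Set.mem_uIcc_of_le (hx (k + 1).zero_le) (hx hk))
  rw [← sum_integral_adjacent_intervals hpiece, ← sum_sub_distrib]
  calc _ ≤ ∑ k ∈ range n, |(x (k + 1) - x k) * f (x k) - ∫ t in x k..x (k + 1), f t| :=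
        abs_sum_le_sum_abs _ _
    _ ≤ ∑ k ∈ range n, ε * (x (k + 1) - x k) := by
        refine sum_le_sum fun k hk => ?_
        have hk := mem_range.1 hk
        have hle : x k ≤ x (k + 1) := hx k.le_succ
        have hsub : Set.uIoc (x k) (x (k + 1)) ⊆ Set.Icc (x k) (x (k + 1)) :=
          Set.uIcc_of_le hle ▸ Set.uIoc_subset_uIcc
        simpa only [abs_of_nonneg (sub_nonneg.2 hle)] using
          abs_mul_sub_integral_le (hpiece k hk) fun t ht => hosc k hk t (hsub ht)
    _ = ε * (x n - x 0) := by rw [← mul_sum, sum_range_sub]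

noncomputable def leftRiemannSum (f : ℝ → ℝ) (a b : ℝ) (n : ℕ) : ℝ :=
  ∑ k ∈ range n, (b - a) / n * f (a + k * (b - a) / n)

theorem tendsto_leftRiemannSum {f : ℝ → ℝ} {a b : ℝ} (hab : a ≤ b)
    (hf : ContinuousOn f (Set.Icc a b)) :
    Tendsto (leftRiemannSum f a b) atTop (𝓝 (∫ x in a..b, f x)) := by
  rw [Metric.tendsto_atTop]
  intro ε hε
  obtain ⟨δ, hδ, hfδ⟩ := Metric.uniformContinuousOn_iff_le.1
    (isCompact_Icc.uniformContinuousOn_of_continuous hf) (ε / (b - a + 1)) (by positivity)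
  obtain ⟨N, hN⟩ := exists_nat_gt ((b - a) / δ)
  refine ⟨N, fun n hn => ?_⟩
  have hn : (b - a) / δ < n := hN.trans_le (Nat.cast_le.2 hn)
  have hn₀ : (0 : ℝ) < n := lt_of_le_of_lt (by positivity) hn
  have hmesh : (b - a) / n ≤ δ := by
    rw [div_lt_iff₀ hδ] at hn
    rw [div_le_iff₀ hn₀]
    linarith
  set x : ℕ → ℝ := fun k => a + k * ((b - a) / n) with hx_def
  have hstep : ∀ k, x (k + 1) - x k = (b - a) / n := fun k => by
    simp only [hx_def]; push_cast; ring
  have hx : Monotone x := monotone_nat_of_le_succ fun k => by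
    have : 0 ≤ (b - a) / n := div_nonneg (sub_nonneg.2 hab) hn₀.le
    linarith [hstep k]
  have hx₀ : x 0 = a := by simp [hx_def]
  have hxn : x n = b := by simp only [hx_def]; field_simp; ring
  have hosc : ∀ k < n, ∀ t ∈ Set.Icc (x k) (x (k + 1)), |f t - f (x k)| ≤ ε / (b - a + 1) := by
    intro k hk t ht
    have hxk : x k ∈ Set.Icc a b := ⟨hx₀ ▸ hx k.zero_le, hxn ▸ hx hk.le⟩
    have htab : t ∈ Set.Icc a b := ⟨hxk.1.trans ht.1, ht.2.trans (hxn ▸ hx hk)⟩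
    refine hfδ t htab (x k) hxk ?_
    rw [Real.dist_eq, abs_of_nonneg (sub_nonneg.2 ht.1)]
    linarith [ht.2, hstep k]
  have hsum : leftRiemannSum f a b n = ∑ k ∈ range n, (x (k + 1) - x k) * f (x k) := by
    refine sum_congr rfl fun k _ => ?_
    rw [hstep, hx_def, mul_div_assoc]
  rw [Real.dist_eq, hsum, ← hx₀, ← hxn]
  calc _ ≤ ε / (b - a + 1) * (x n - x 0) := abs_sum_mul_sub_integral_le hx
          (by rw [hx₀, hxn]; exact hf.intervalIntegrable_of_Icc hab) hosc
    _ < ε := by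
      rw [hxn, hx₀, div_mul_eq_mul_div, div_lt_iff₀ (by linarith)]
      nlinarith

theorem sum_Icc_neg_one_pow_mul {R : Type*} [CommRing R] (g : ℕ → R) (M : ℕ) :
    ∑ m ∈ Icc 1 (2 * M + 1), (-1) ^ (m + 1) * g m
      = ∑ m ∈ Icc 1 (2 * M + 1), g m - 2 * ∑ k ∈ Icc 1 M, g (2 * k) := by
  induction M with
  | zero => simp
  | succ M ih =>
    rw [show 2 * (M + 1) + 1 = 2 * M + 1 + 1 + 1 by ring]
    simp only [sum_Icc_succ_top (show 1 ≤ 2 * M + 1 + 1 + 1 by omega),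
      sum_Icc_succ_top (show 1 ≤ 2 * M + 1 + 1 by omega),
      sum_Icc_succ_top (show 1 ≤ M + 1 by omega), show 2 * (M + 1) = 2 * M + 1 + 1 by ring, ih]
    simp only [pow_succ, pow_mul]
    ring

section Exhaustion

variable (f : ℝ → ℝ) (a b : ℝ)

noncomputable def exhaustionTerm (n : ℕ) : ℝ :=
  ∑ m ∈ Icc (1 : ℕ) (2 ^ n - 1), (-1 : ℝ) ^ (m + 1) / 2 ^ n * f (a + (m : ℝ) * (b - a) / 2 ^ n)

noncomputable def dyadicInteriorSum (N : ℕ) : ℝ :=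
  ∑ m ∈ Icc (1 : ℕ) (2 ^ N - 1), f (a + (m : ℝ) * (b - a) / 2 ^ N) / 2 ^ N

theorem dyadicInteriorSum_succ (N : ℕ) :
    dyadicInteriorSum f a b (N + 1) = dyadicInteriorSum f a b N + exhaustionTerm f a b (N + 1) := by
  obtain ⟨M, hM⟩ : ∃ M, 2 ^ N = M + 1 := ⟨2 ^ N - 1, (Nat.sub_add_cancel Nat.one_le_two_pow).symm⟩
  have hM' : 2 ^ (N + 1) - 1 = 2 * M + 1 := by rw [pow_succ]; omega
  set g : ℕ → ℝ := fun m => f (a + (m : ℝ) * (b - a) / 2 ^ (N + 1)) / 2 ^ (N + 1) with hg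
  have hfine : dyadicInteriorSum f a b (N + 1) = ∑ m ∈ Icc 1 (2 * M + 1), g m := by
    rw [dyadicInteriorSum, hM']
  have hcoarse : dyadicInteriorSum f a b N = 2 * ∑ k ∈ Icc 1 M, g (2 * k) := by
    rw [dyadicInteriorSum, mul_sum, hM, Nat.add_sub_cancel]
    refine sum_congr rfl fun k _ => ?_
    rw [hg]
    simp only [pow_succ, Nat.cast_mul, Nat.cast_ofNat]
    rw [show a + 2 * (k : ℝ) * (b - a) / (2 ^ N * 2) = a + k * (b - a) / 2 ^ N by field_simp]
    ring
  have hterm : exhaustionTerm f a b (N + 1) = ∑ m ∈ Icc 1 (2 * M + 1), (-1) ^ (m + 1) * g m := by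
    rw [exhaustionTerm, hM']
    exact sum_congr rfl fun m _ => by ring
  rw [hfine, hcoarse, hterm, sum_Icc_neg_one_pow_mul]
  ring

theorem sum_Icc_exhaustionTerm (N : ℕ) :
    ∑ n ∈ Icc 1 N, exhaustionTerm f a b n = dyadicInteriorSum f a b N := by
  induction N with
  | zero => simp [dyadicInteriorSum]
  | succ N ih => rw [sum_Icc_succ_top (by omega), ih, dyadicInteriorSum_succ]

theorem mul_dyadicInteriorSum (N : ℕ) :
    (b - a) * dyadicInteriorSum f a b N = leftRiemannSum f a b (2 ^ N) - (b - a) / 2 ^ N * f a := by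
  rw [leftRiemannSum, sum_range_eq_add_Ico _ (Nat.two_pow_pos N),
    ← Icc_sub_one_right_eq_Ico_of_not_isMin (by simp), dyadicInteriorSum, mul_sum]
  push_cast
  simp only [zero_mul, zero_div, add_zero, add_sub_cancel_left]
  refine sum_congr rfl fun m _ => ?_
  ring

end Exhaustion

theorem stmt_1 (a b : ℝ) (hab : a < b) (f : ℝ → ℝ)
    (hf : ContinuousOn f (Set.Icc a b)) :
    ∃ S : ℝ,
      Filter.Tendsto
        (fun N : ℕ => ∑ n ∈ Finset.Icc (1:ℕ) N, ∑ m ∈ Finset.Icc (1:ℕ) (2 ^ n - 1),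
          (-1 : ℝ) ^ (m + 1) / 2 ^ n * f (a + (m:ℝ) * (b - a) / 2 ^ n))
        Filter.atTop (nhds S) ∧
      ∫ x in a..b, f x = (b - a) * S := by
  have hba : b - a ≠ 0 := sub_ne_zero.2 hab.ne'
  refine ⟨(∫ x in a..b, f x) / (b - a), ?_, by field_simp⟩
  have hriemann := (tendsto_leftRiemannSum hab.le hf).comp
    (tendsto_pow_atTop_atTop_of_one_lt (one_lt_two : 1 < 2))
  have hcorner : Tendsto (fun N : ℕ => (b - a) / 2 ^ N * f a) atTop (𝓝 0) := by
    simpa using (tendsto_const_nhds.div_atTop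
      (tendsto_pow_atTop_atTop_of_one_lt (one_lt_two : (1 : ℝ) < 2))).mul_const (f a)
  have hdyadic : Tendsto (dyadicInteriorSum f a b) atTop (𝓝 ((∫ x in a..b, f x) / (b - a))) := by
    refine (sub_zero (∫ x in a..b, f x) ▸ hriemann.sub hcorner).div_const (b - a) |>.congr
      fun N => ?_
    rw [div_eq_iff hba, mul_comm _ (b - a), mul_dyadicInteriorSum, Function.comp_apply]
  exact hdyadic.congr fun N => (sum_Icc_exhaustionTerm f a b N).symm
end

section
/- For every real number x, cos(x) = 1 - x · ∑_{n=1}^{∞} ∑_{m=1}^{2^n - 1} (-1)^{m+1} 2^{-n} sin(m·x/2^n), where for each n the inner sum is finite and the outer series over n converges. -/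
open Finset Filter Real Topology

/-!
`dyadicAverage f x n` is `x⁻¹` times the left Riemann sum of `f` on `[0, x]` with `2 ^ n` equal
steps. Passing from level `n` to `n + 1` adds the odd-indexed grid points and halves the weights,
so the alternating inner sum at level `n + 1` is exactly the difference of consecutive averages and
the double series telescopes to `dyadicAverage sin x N`. For `sin` the Riemann sum has a closed
form by Lagrange's trigonometric identity
`2 sin (h/2) ∑_{m<K} sin (m h) = cos (h/2) - cos (K h - h/2)`,
and letting `h = x / 2 ^ N → 0` gives the limit `(1 - cos x) / x`.
-/

theorem Finset.sum_range_two_mul {M : Type*} [AddCommMonoid M] (n : ℕ) (f : ℕ → M) :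
    ∑ m ∈ range (2 * n), f m = ∑ k ∈ range n, (f (2 * k) + f (2 * k + 1)) := by
  induction n with
  | zero => simp
  | succ n ih => rw [mul_add_one, sum_range_succ, sum_range_succ, sum_range_succ, ih, add_assoc]

theorem Finset.sum_Icc_one_sub_one_eq_sum_range {M : Type*} [AddCommMonoid M] (n : ℕ)
    (f : ℕ → M) (hf : f 0 = 0) : ∑ m ∈ Icc 1 (n - 1), f m = ∑ m ∈ range n, f m := by
  rcases n.eq_zero_or_pos with rfl | hn
  · simp
  rw [sum_range_eq_add_Ico f hn, hf, zero_add,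
    Icc_sub_one_right_eq_Ico_of_not_isMin (not_isMin_iff_ne_bot.2 hn.ne')]

noncomputable def dyadicAverage (f : ℝ → ℝ) (x : ℝ) (n : ℕ) : ℝ :=
  ∑ m ∈ range (2 ^ n), f (m * x / 2 ^ n) / 2 ^ n

theorem sum_range_neg_one_pow_mul_eq_dyadicAverage_sub (f : ℝ → ℝ) (x : ℝ) (n : ℕ) :
    ∑ m ∈ range (2 ^ (n + 1)), (-1 : ℝ) ^ (m + 1) / 2 ^ (n + 1) * f (m * x / 2 ^ (n + 1)) =
      dyadicAverage f x (n + 1) - dyadicAverage f x n := by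
  simp only [dyadicAverage, pow_succ' (2 : ℕ), sum_range_two_mul, ← sum_sub_distrib]
  refine sum_congr rfl fun k _ => ?_
  have hk : ((2 * k : ℕ) : ℝ) * x / 2 ^ (n + 1) = k * x / 2 ^ n := by
    push_cast; rw [pow_succ]; field_simp
  rw [hk, (odd_two_mul_add_one k).add_one.neg_one_pow, (odd_two_mul_add_one k).neg_one_pow,
    pow_succ (2 : ℝ) n]
  field_simp
  ring

theorem sum_Icc_sum_Icc_neg_one_pow_mul_eq_dyadicAverage (f : ℝ → ℝ) (hf : f 0 = 0) (x : ℝ)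
    (N : ℕ) :
    ∑ n ∈ Icc 1 N, ∑ m ∈ Icc (1 : ℕ) (2 ^ n - 1), (-1 : ℝ) ^ (m + 1) / 2 ^ n * f (m * x / 2 ^ n) =
      dyadicAverage f x N := by
  induction N with
  | zero => simp [dyadicAverage, hf]
  | succ N ih =>
    rw [sum_Icc_succ_top (Nat.le_add_left 1 N), ih,
      sum_Icc_one_sub_one_eq_sum_range _ _ (by simp [hf]),
      sum_range_neg_one_pow_mul_eq_dyadicAverage_sub, add_sub_cancel]

theorem two_mul_sin_mul_sum_range_sin (h : ℝ) (K : ℕ) :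
    2 * sin (h / 2) * ∑ m ∈ range K, sin (m * h) = cos (h / 2) - cos (K * h - h / 2) := by
  induction K with
  | zero => simp
  | succ K ih =>
    rw [sum_range_succ, mul_add, ih, Nat.cast_succ, add_one_mul, add_sub_assoc, sub_half,
      cos_sub, cos_add]
    ring

theorem mul_sinc_mul_dyadicAverage_sin (x : ℝ) (n : ℕ) :
    x * sinc (x / 2 ^ (n + 1)) * dyadicAverage sin x n =
      cos (x / 2 ^ (n + 1)) - cos (x - x / 2 ^ (n + 1)) := by
  rcases eq_or_ne x 0 with rfl | hx
  · simp
  have hu : x / 2 ^ (n + 1) ≠ 0 := by positivity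
  have h_half : x / 2 ^ n / 2 = x / 2 ^ (n + 1) := by rw [pow_succ, div_div]
  have h_total : ((2 ^ n : ℕ) : ℝ) * (x / 2 ^ n) = x := by push_cast; field_simp
  have h_sinc : x * sinc (x / 2 ^ (n + 1)) = 2 * sin (x / 2 ^ (n + 1)) * 2 ^ n := by
    rw [sinc_of_ne_zero hu, pow_succ]; field_simp
  have key := two_mul_sin_mul_sum_range_sin (x / 2 ^ n) (2 ^ n)
  simp only [h_half, h_total, ← mul_div_assoc] at key
  rw [h_sinc, dyadicAverage, ← sum_div, ← key]
  field_simp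

theorem tendsto_dyadicAverage_sin (x : ℝ) :
    Tendsto (dyadicAverage sin x) atTop (𝓝 ((1 - cos x) / x)) := by
  rcases eq_or_ne x 0 with rfl | hx
  · simp only [cos_zero, sub_self, div_zero]
    exact tendsto_const_nhds.congr fun n => by simp [dyadicAverage]
  have hu : Tendsto (fun n : ℕ => x / 2 ^ (n + 1)) atTop (𝓝 0) :=
    tendsto_const_nhds.div_atTop
      ((tendsto_pow_atTop_atTop_of_one_lt one_lt_two).comp (tendsto_add_atTop_nat 1))
  have h_den : Tendsto (fun n : ℕ => x * sinc (x / 2 ^ (n + 1))) atTop (𝓝 x) := by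
    simpa using (continuous_sinc.tendsto 0).comp hu |>.const_mul x
  have h_num : Tendsto (fun n : ℕ => cos (x / 2 ^ (n + 1)) - cos (x - x / 2 ^ (n + 1))) atTop
      (𝓝 (1 - cos x)) := by
    have h_sub : Tendsto (fun n : ℕ => x - x / 2 ^ (n + 1)) atTop (𝓝 x) := by
      simpa using tendsto_const_nhds.sub hu
    simpa using ((continuous_cos.tendsto 0).comp hu).sub ((continuous_cos.tendsto x).comp h_sub)
  refine (h_num.div h_den hx).congr' ?_
  filter_upwards [h_den.eventually_ne hx] with n hn
  rw [Pi.div_apply, ← mul_sinc_mul_dyadicAverage_sin, mul_div_cancel_left₀ _ hn]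

theorem stmt_6 (x : ℝ) :
    ∃ S : ℝ,
      Filter.Tendsto
        (fun N : ℕ => ∑ n ∈ Finset.Icc (1:ℕ) N, ∑ m ∈ Finset.Icc (1:ℕ) (2 ^ n - 1),
          (-1 : ℝ) ^ (m + 1) / 2 ^ n * Real.sin ((m:ℝ) * x / 2 ^ n))
        Filter.atTop (nhds S) ∧
      Real.cos x = 1 - x * S := by
  refine ⟨(1 - cos x) / x, ?_, ?_⟩
  · exact (tendsto_dyadicAverage_sin x).congr fun N =>
      (sum_Icc_sum_Icc_neg_one_pow_mul_eq_dyadicAverage sin sin_zero x N).symm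
  · rcases eq_or_ne x 0 with rfl | hx
    · simp
    · field_simp
      ring
end

section
/- For every real number x with 0 < x, log(x) = ∑_{n=1}^{∞} ∑_{m=1}^{2^n - 1} (-1)^{m+1} (x - 1)/(2^n + m·(x - 1)), where for each n the inner sum is finite and the outer series over n converges. (In particular each denominator 2^n + m(x-1) is nonzero since m ≤ 2^n - 1 and x > 0.) -/
/-!
`R K = logRiemannSum x K = ∑_{m=1}^{K-1} (x-1)/(K + m(x-1))` is, with `h = (x-1)/K`, `∑ h/(1 + mh)`:
the Riemann sum of `∫₁ˣ dt/t` over the interior nodes of the uniform partition of `[1, x]` into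
`K` pieces. Halving the mesh keeps the old nodes and adds the new ones, and
`R (2K) - R K` is exactly the alternating inner sum at level `2K`; so the `N`-th partial sum of
the double series is `R (2^N)`.

Because `(b-a)/b ≤ log b - log a ≤ (b-a)/a` for all `a, b > 0`, summing over consecutive nodes
traps `R K` between `log x - (x-1)/K` and `log x - (x-1)/(xK)`, whatever the sign of `x - 1`.
-/

open Finset Filter Real Topology

lemma sub_div_le_log_sub_log {a b : ℝ} (ha : 0 < a) (hb : 0 < b) :
    (b - a) / b ≤ log b - log a := by
  have h := one_sub_inv_le_log_of_pos (div_pos hb ha)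
  rwa [log_div hb.ne' ha.ne', inv_div, ← div_self hb.ne', ← sub_div] at h

lemma log_sub_log_le_sub_div {a b : ℝ} (ha : 0 < a) (hb : 0 < b) :
    log b - log a ≤ (b - a) / a := by
  have h := log_le_sub_one_of_pos (div_pos hb ha)
  rwa [log_div hb.ne' ha.ne', ← div_self ha.ne', ← sub_div] at h

section Telescoping

variable {t : ℕ → ℝ} {K : ℕ}

lemma sum_sub_div_succ_le_log_sub_log (ht : ∀ m ≤ K, 0 < t m) :
    ∑ m ∈ range K, (t (m + 1) - t m) / t (m + 1) ≤ log (t K) - log (t 0) := by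
  rw [← sum_range_sub (fun m => log (t m))]
  refine sum_le_sum fun m hm => sub_div_le_log_sub_log (ht m ?_) (ht (m + 1) ?_) <;> grind

lemma log_sub_log_le_sum_sub_div (ht : ∀ m ≤ K, 0 < t m) :
    log (t K) - log (t 0) ≤ ∑ m ∈ range K, (t (m + 1) - t m) / t m := by
  rw [← sum_range_sub (fun m => log (t m))]
  refine sum_le_sum fun m hm => log_sub_log_le_sub_div (ht m ?_) (ht (m + 1) ?_) <;> grind

end Telescoping

lemma sum_range_succ_eq_sum_Ico_add {M : Type*} [AddCommMonoid M] (f : ℕ → M) {K : ℕ}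
    (hK : 0 < K) : ∑ m ∈ range K, f (m + 1) = ∑ m ∈ Ico 1 K, f m + f K := by
  rw [← sum_Ico_succ_top hK, sum_Ico_eq_sum_range]
  simp only [add_tsub_cancel_right, add_comm 1]

lemma sum_range_two_mul_neg_one_pow_mul {R : Type*} [CommRing R] (g : ℕ → R) (K : ℕ) :
    ∑ m ∈ range (2 * K), (-1) ^ (m + 1) * g m
      = ∑ m ∈ range (2 * K), g m - 2 * ∑ j ∈ range K, g (2 * j) := by
  induction K with
  | zero => simp
  | succ K ih =>
    rw [mul_add_one, sum_range_succ, sum_range_succ, sum_range_succ, sum_range_succ,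
      sum_range_succ, ih]
    simp only [pow_succ, pow_mul]
    ring

lemma sum_Ico_two_mul_neg_one_pow_mul {R : Type*} [CommRing R] (g : ℕ → R) {K : ℕ}
    (hK : 0 < K) :
    ∑ m ∈ Ico 1 (2 * K), (-1) ^ (m + 1) * g m
      = ∑ m ∈ Ico 1 (2 * K), g m - 2 * ∑ j ∈ Ico 1 K, g (2 * j) := by
  have h := sum_range_two_mul_neg_one_pow_mul g K
  rw [sum_range_eq_add_Ico _ (by omega), sum_range_eq_add_Ico _ (by omega),
    sum_range_eq_add_Ico _ hK] at h
  simp only [zero_add, pow_one, mul_zero] at h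
  linear_combination h

noncomputable def logRiemannSum (x : ℝ) (K : ℕ) : ℝ :=
  ∑ m ∈ Ico 1 K, (x - 1) / (K + m * (x - 1))

lemma logRiemannSum_two_mul_sub (x : ℝ) {K : ℕ} (hK : 0 < K) :
    logRiemannSum x (2 * K) - logRiemannSum x K
      = ∑ m ∈ Ico 1 (2 * K), (-1) ^ (m + 1) * (x - 1) / (((2 * K : ℕ) : ℝ) + m * (x - 1)) := by
  simp_rw [mul_div_assoc]
  rw [sum_Ico_two_mul_neg_one_pow_mul _ hK, logRiemannSum, logRiemannSum, mul_sum]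
  congr 1
  refine sum_congr rfl fun j _ => ?_
  rw [← mul_div_mul_left (x - 1) (K + j * (x - 1)) two_ne_zero, mul_div_assoc]
  push_cast
  ring_nf

section RiemannSum

variable {x : ℝ} {K : ℕ}

lemma logRiemannSum_bounds (hx : 0 < x) (hK : 0 < K) :
    log x - (x - 1) / K ≤ logRiemannSum x K ∧ logRiemannSum x K ≤ log x - (x - 1) / x / K := by
  set t : ℕ → ℝ := fun m => K + m * (x - 1)
  have hKpos : (0 : ℝ) < K := by exact_mod_cast hK
  have ht : ∀ m ≤ K, 0 < t m := fun m hm => by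
    have : (m : ℝ) ≤ K := by exact_mod_cast hm
    rcases (Nat.cast_nonneg m : (0 : ℝ) ≤ m).eq_or_lt with h0 | hm0
    · simp [t, ← h0, hKpos]
    · nlinarith [mul_pos hm0 hx]
  have hlog : log (t K) - log (t 0) = log x := by
    simp only [t, CharP.cast_eq_zero, zero_mul, add_zero]
    rw [show (K : ℝ) + K * (x - 1) = K * x by ring, log_mul hKpos.ne' hx.ne', add_sub_cancel_left]
  have hstep : ∀ m, t (m + 1) - t m = x - 1 := fun m => by simp only [t]; push_cast; ring
  have htK : t K = K * x := by simp only [t]; ring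
  have lower := log_sub_log_le_sum_sub_div ht
  have upper := sum_sub_div_succ_le_log_sub_log ht
  simp only [hstep, hlog] at lower upper
  rw [sum_range_eq_add_Ico _ hK] at lower
  rw [sum_range_succ_eq_sum_Ico_add (fun m => (x - 1) / t m) hK, htK] at upper
  simp only [t, CharP.cast_eq_zero, zero_mul, add_zero] at lower upper
  rw [div_div, mul_comm x]
  exact ⟨by unfold logRiemannSum; linarith, by unfold logRiemannSum; linarith⟩

theorem tendsto_logRiemannSum (hx : 0 < x) :
    Tendsto (logRiemannSum x) atTop (𝓝 (log x)) := by
  have hlim (c : ℝ) : Tendsto (fun K : ℕ => log x - c / K) atTop (𝓝 (log x)) := by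
    simpa using tendsto_const_nhds.sub (tendsto_const_div_atTop_nhds_zero_nat c)
  refine tendsto_of_tendsto_of_tendsto_of_le_of_le' (hlim (x - 1)) (hlim ((x - 1) / x)) ?_ ?_ <;>
    filter_upwards [eventually_gt_atTop 0] with K hK
  exacts [(logRiemannSum_bounds hx hK).1, (logRiemannSum_bounds hx hK).2]

end RiemannSum

lemma sum_Icc_sum_neg_one_pow_eq_logRiemannSum (x : ℝ) (N : ℕ) :
    ∑ n ∈ Icc 1 N, ∑ m ∈ Icc (1 : ℕ) (2 ^ n - 1),
        (-1 : ℝ) ^ (m + 1) * (x - 1) / (2 ^ n + (m : ℝ) * (x - 1))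
      = logRiemannSum x (2 ^ N) := by
  induction N with
  | zero => simp [logRiemannSum]
  | succ N ih =>
    rw [sum_Icc_succ_top (by omega), ih, eq_comm, ← sub_eq_iff_eq_add', pow_succ',
      logRiemannSum_two_mul_sub x (by positivity),
      Icc_sub_one_right_eq_Ico_of_not_isMin (by simp)]
    push_cast [pow_succ']
    rfl

theorem stmt_10 (x : ℝ) (hx : 0 < x) :
    ∃ S : ℝ,
      Filter.Tendsto
        (fun N : ℕ => ∑ n ∈ Finset.Icc (1:ℕ) N, ∑ m ∈ Finset.Icc (1:ℕ) (2 ^ n - 1),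
          (-1 : ℝ) ^ (m + 1) * (x - 1) / (2 ^ n + (m:ℝ) * (x - 1)))
        Filter.atTop (nhds S) ∧
      Real.log x = S := by
  refine ⟨log x, ?_, rfl⟩
  simp_rw [sum_Icc_sum_neg_one_pow_eq_logRiemannSum]
  exact (tendsto_logRiemannSum hx).comp (tendsto_pow_atTop_atTop_of_one_lt one_lt_two)
end

section
/- For every real number p ≥ 0, Γ(p + 1) = ∫_0^1 (log(1/x))^p dx = ∑_{n=1}^{∞} ∑_{m=1}^{2^n - 1} (-1)^{m+1} 2^{-n} (log(2^n/m))^p, where (·)^p denotes the real power (each base log(2^n/m) is nonnegative since 1 ≤ m ≤ 2^n - 1), for each n the inner sum is finite, and the outer series over n converges. -/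
/-!
The substitution `x = exp (-t)` turns `∫₀¹ (log (1 / x)) ^ p dx` into Euler's integral for
`Γ (p + 1)`. Splitting the inner sum of level `n` into all terms minus twice the even ones shows
that it is the difference of the dyadic Riemann sums `2⁻ⁿ ∑_{0 < m < 2ⁿ} f (m / 2ⁿ)` of
`f x = (log (1 / x)) ^ p` at levels `n` and `n - 1`, so the partial sums of the double series are
these Riemann sums. Since `f` is antitone on `(0, 1]`, the Riemann sum at level `n` lies between
`∫_{2⁻ⁿ}^1 f` and `∫_0^{1 - 2⁻ⁿ} f`, both of which tend to `∫₀¹ f`.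
-/

open MeasureTheory Set Real Filter Topology

theorem image_exp_neg_Ioi_zero : (fun t : ℝ => exp (-t)) '' Ioi 0 = Ioo 0 1 := by
  ext x
  constructor
  · rintro ⟨t, ht, rfl⟩
    exact ⟨exp_pos _, exp_lt_one_iff.2 (neg_lt_zero.2 ht)⟩
  · rintro ⟨hx0, hx1⟩
    exact ⟨-log x, neg_pos.2 (log_neg hx0 hx1), by simp [exp_log hx0]⟩

section ExpNegSubstitution

variable {E : Type*} [NormedAddCommGroup E] [NormedSpace ℝ E]

private theorem hasDerivWithinAt_exp_neg (t : ℝ) :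
    HasDerivWithinAt (fun t : ℝ => exp (-t)) (-exp (-t)) (Ioi 0) t := by
  simpa using ((hasDerivAt_neg t).exp).hasDerivWithinAt

private theorem injOn_exp_neg : InjOn (fun t : ℝ => exp (-t)) (Ioi 0) :=
  fun _ _ _ _ h => neg_injective (exp_injective h)

theorem integral_Ioo_zero_one_eq_integral_comp_exp_neg (g : ℝ → E) :
    ∫ x in Ioo 0 1, g x = ∫ t in Ioi 0, exp (-t) • g (exp (-t)) := by
  rw [← image_exp_neg_Ioi_zero, integral_image_eq_integral_abs_deriv_smul measurableSet_Ioi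
    (fun t _ => hasDerivWithinAt_exp_neg t) injOn_exp_neg]
  simp [abs_of_pos (exp_pos _)]

theorem integrableOn_Ioo_zero_one_iff_comp_exp_neg (g : ℝ → E) :
    IntegrableOn g (Ioo 0 1) ↔ IntegrableOn (fun t => exp (-t) • g (exp (-t))) (Ioi 0) := by
  rw [← image_exp_neg_Ioi_zero, integrableOn_image_iff_integrableOn_abs_deriv_smul
    measurableSet_Ioi (fun t _ => hasDerivWithinAt_exp_neg t) injOn_exp_neg]
  simp [abs_of_pos (exp_pos _)]

end ExpNegSubstitution

theorem exp_neg_smul_log_one_div_exp_neg_rpow (p t : ℝ) :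
    exp (-t) • log (1 / exp (-t)) ^ p = exp (-t) * t ^ p := by
  rw [one_div, ← exp_neg, neg_neg, log_exp, smul_eq_mul]

theorem intervalIntegrable_log_one_div_rpow {p : ℝ} (hp : -1 < p) :
    IntervalIntegrable (fun x => log (1 / x) ^ p) volume 0 1 := by
  rw [intervalIntegrable_iff_integrableOn_Ioc_of_le zero_le_one,
    integrableOn_Ioc_iff_integrableOn_Ioo, integrableOn_Ioo_zero_one_iff_comp_exp_neg]
  simp only [exp_neg_smul_log_one_div_exp_neg_rpow]
  simpa using GammaIntegral_convergent (show 0 < p + 1 by linarith)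

theorem integral_log_one_div_rpow {p : ℝ} (hp : -1 < p) :
    ∫ x in (0 : ℝ)..1, log (1 / x) ^ p = Gamma (p + 1) := by
  rw [intervalIntegral.integral_of_le zero_le_one, integral_Ioc_eq_integral_Ioo,
    integral_Ioo_zero_one_eq_integral_comp_exp_neg, Gamma_eq_integral (by linarith)]
  simp only [exp_neg_smul_log_one_div_exp_neg_rpow, add_sub_cancel_right]

theorem antitoneOn_log_one_div_rpow {p : ℝ} (hp : 0 ≤ p) :
    AntitoneOn (fun x => log (1 / x) ^ p) (Ioc 0 1) := by
  intro x hx y hy hxy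
  have hlog : log (1 / y) ≤ log (1 / x) :=
    log_le_log (by simpa using hy.1) (one_div_le_one_div_of_le hx.1 hxy)
  exact rpow_le_rpow (log_nonneg (one_le_one_div hy.1 hy.2)) hlog hp

theorem Finset.sum_Ico_neg_one_pow_mul (c : ℕ → ℝ) (M : ℕ) :
    ∑ m ∈ Finset.Ico 1 (2 * M), (-1 : ℝ) ^ (m + 1) * c m =
      ∑ m ∈ Finset.Ico 1 (2 * M), c m - 2 * ∑ k ∈ Finset.Ico 1 M, c (2 * k) := by
  have hsplit (m : ℕ) : (-1 : ℝ) ^ (m + 1) * c m = c m - if Even m then 2 * c m else 0 := by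
    rcases Nat.even_or_odd m with h | h
    · rw [h.add_one.neg_one_pow, if_pos h]; ring
    · rw [h.add_one.neg_one_pow, if_neg (Nat.not_even_iff_odd.2 h)]; ring
  have hevens : (Finset.Ico 1 (2 * M)).filter Even = (Finset.Ico 1 M).image (2 * ·) := by
    ext m
    simp only [Finset.mem_filter, Finset.mem_Ico, Finset.mem_image, Nat.even_iff]
    constructor
    · rintro ⟨⟨h1, h2⟩, h3⟩
      exact ⟨m / 2, by omega, by omega⟩
    · rintro ⟨k, ⟨hk1, hk2⟩, rfl⟩
      omega
  rw [Finset.sum_congr rfl fun m _ => hsplit m, Finset.sum_sub_distrib, ← Finset.sum_filter,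
    hevens, Finset.sum_image fun _ _ _ _ h => by omega, Finset.mul_sum]

noncomputable def dyadicRiemannSum (g : ℝ → ℝ) (n : ℕ) : ℝ :=
  ∑ m ∈ Finset.Ico (1 : ℕ) (2 ^ n), g (m / 2 ^ n) / 2 ^ n

theorem sum_Ico_neg_one_pow_div_two_pow_eq_sub (g : ℝ → ℝ) (n : ℕ) :
    ∑ m ∈ Finset.Ico (1 : ℕ) (2 ^ (n + 1)), (-1 : ℝ) ^ (m + 1) / 2 ^ (n + 1) * g (m / 2 ^ (n + 1)) =
      dyadicRiemannSum g (n + 1) - dyadicRiemannSum g n := by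
  have h := Finset.sum_Ico_neg_one_pow_mul (fun m => g (m / 2 ^ (n + 1)) / 2 ^ (n + 1)) (2 ^ n)
  rw [← pow_succ'] at h
  have hevens : ∀ k ∈ Finset.Ico (1 : ℕ) (2 ^ n),
      2 * (g ((2 * k : ℕ) / 2 ^ (n + 1)) / 2 ^ (n + 1)) = g (k / 2 ^ n) / 2 ^ n := fun k _ => by
    push_cast
    rw [pow_succ', mul_div_mul_left _ _ two_ne_zero]
    ring
  rw [dyadicRiemannSum, dyadicRiemannSum, ← Finset.sum_congr rfl hevens, ← Finset.mul_sum, ← h]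
  exact Finset.sum_congr rfl fun m _ => by ring

theorem sum_Icc_sum_Icc_neg_one_pow_div_two_pow_eq_dyadicRiemannSum (g : ℝ → ℝ) (N : ℕ) :
    ∑ n ∈ Finset.Icc (1 : ℕ) N, ∑ m ∈ Finset.Icc (1 : ℕ) (2 ^ n - 1),
      (-1 : ℝ) ^ (m + 1) / 2 ^ n * g (m / 2 ^ n) = dyadicRiemannSum g N := by
  induction N with
  | zero => simp [dyadicRiemannSum]
  | succ N ih =>
    rw [Finset.sum_Icc_succ_top (Nat.le_add_left 1 N), ih,
      Finset.Icc_sub_one_right_eq_Ico_of_not_isMin (by simp), sum_Ico_neg_one_pow_div_two_pow_eq_sub]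
    ring

theorem div_natCast_add_one_mem_uIcc {c : ℝ} {n : ℕ} (hc0 : 0 ≤ c) (hc : c ≤ n + 1) :
    c / (n + 1) ∈ uIcc (0 : ℝ) 1 := by
  rw [uIcc_of_le zero_le_one]
  exact ⟨by positivity, div_le_one_of_le₀ hc (by positivity)⟩

namespace AntitoneOn

variable {f : ℝ → ℝ} {a b : ℝ}

theorem integral_le_sub_mul_left (hf : AntitoneOn f (Icc a b)) (hab : a ≤ b) :
    ∫ t in a..b, f t ≤ (b - a) * f a := by
  calc ∫ t in a..b, f t ≤ ∫ _ in a..b, f a :=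
        intervalIntegral.integral_mono_on hab
          (AntitoneOn.intervalIntegrable (by rwa [uIcc_of_le hab]))
          intervalIntegrable_const fun t ht => hf (left_mem_Icc.2 hab) ht ht.1
    _ = (b - a) * f a := by simp

theorem sub_mul_right_le_integral (hf : AntitoneOn f (Ioc a b)) (hab : a ≤ b)
    (hint : IntervalIntegrable f volume a b) :
    (b - a) * f b ≤ ∫ t in a..b, f t := by
  calc (b - a) * f b = ∫ _ in a..b, f b := by simp
    _ ≤ ∫ t in a..b, f t :=
        intervalIntegral.integral_mono_on_of_le_Ioo hab intervalIntegrable_const hint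
          fun t ht => hf (Ioo_subset_Ioc_self ht) (right_mem_Ioc.2 (ht.1.trans ht.2)) ht.2.le

variable {x : ℕ → ℝ} {m n : ℕ}

theorem integral_le_sum_Ico_sub_mul_left (hf : AntitoneOn f (Icc (x m) (x n)))
    (hx : Monotone x) (hmn : m ≤ n) :
    ∫ t in x m..x n, f t ≤ ∑ k ∈ Finset.Ico m n, (x (k + 1) - x k) * f (x k) := by
  have hsub (k) (hk : k ∈ Ico m n) : Icc (x k) (x (k + 1)) ⊆ Icc (x m) (x n) :=
    Icc_subset_Icc (hx hk.1) (hx hk.2)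
  rw [← intervalIntegral.sum_integral_adjacent_intervals_Ico hmn fun k hk =>
    AntitoneOn.intervalIntegrable (by rw [uIcc_of_le (hx k.le_succ)]; exact hf.mono (hsub k hk))]
  exact Finset.sum_le_sum fun k hk =>
    (hf.mono (hsub k (Finset.mem_Ico.1 hk))).integral_le_sub_mul_left (hx k.le_succ)

theorem sum_Ico_sub_mul_right_le_integral (hf : AntitoneOn f (Ioc (x m) (x n)))
    (hint : IntervalIntegrable f volume (x m) (x n)) (hx : Monotone x) (hmn : m ≤ n) :
    ∑ k ∈ Finset.Ico m n, (x (k + 1) - x k) * f (x (k + 1)) ≤ ∫ t in x m..x n, f t := by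
  have hint' (k) (hk : k ∈ Ico m n) : IntervalIntegrable f volume (x k) (x (k + 1)) :=
    hint.mono_set (by
      rw [uIcc_of_le (hx k.le_succ), uIcc_of_le (hx hmn)]
      exact Icc_subset_Icc (hx hk.1) (hx hk.2))
  rw [← intervalIntegral.sum_integral_adjacent_intervals_Ico hmn hint']
  refine Finset.sum_le_sum fun k hk => ?_
  rw [Finset.mem_Ico] at hk
  exact (hf.mono (Ioc_subset_Ioc (hx hk.1) (hx hk.2))).sub_mul_right_le_integral
    (hx k.le_succ) (hint' k hk)

theorem integral_le_sum_Ico_div_add_one (hf : AntitoneOn f (Ioc 0 1)) (n : ℕ) :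
    ∫ t in (1 / (n + 1) : ℝ)..1, f t ≤ ∑ k ∈ Finset.Ico 1 (n + 1), f (k / (n + 1)) / (n + 1) := by
  have hx : Monotone fun k : ℕ => (k : ℝ) / (n + 1) := fun i j hij => by dsimp only; gcongr
  have key := (hf.mono ?_).integral_le_sum_Ico_sub_mul_left hx (Nat.le_add_left 1 n)
  · simp only [Nat.cast_add_one, ← sub_div, add_sub_cancel_left] at key
    convert key using 2 with k
    · simp
    · field_simp
    · ring
  · intro t ht
    simp only [Nat.cast_one, Nat.cast_add, mem_Icc] at ht
    exact ⟨lt_of_lt_of_le (by positivity) ht.1, ht.2.trans (div_self (by positivity)).le⟩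

theorem sum_Ico_div_add_one_le_integral (hf : AntitoneOn f (Ioc 0 1))
    (hint : IntervalIntegrable f volume 0 1) (n : ℕ) :
    ∑ k ∈ Finset.Ico 1 (n + 1), f (k / (n + 1)) / (n + 1) ≤ ∫ t in (0 : ℝ)..n / (n + 1), f t := by
  have hx : Monotone fun k : ℕ => (k : ℝ) / (n + 1) := fun i j hij => by dsimp only; gcongr
  have key := (hf.mono ?_).sum_Ico_sub_mul_right_le_integral ?_ hx (Nat.zero_le n)
  · simp only [Nat.cast_add_one, ← sub_div, add_sub_cancel_left] at key
    rw [show Finset.Ico 1 (n + 1) = Finset.Ico (0 + 1) (n + 1) from rfl, ← Finset.sum_Ico_add']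
    convert key using 2 with k
    · push_cast; ring
    · simp
  · rw [Nat.cast_zero, zero_div]
    exact Ioc_subset_Ioc_right (div_le_one_of_le₀ (by linarith) (by positivity))
  · rw [Nat.cast_zero, zero_div]
    exact hint.mono_set (uIcc_subset_uIcc left_mem_uIcc
      (div_natCast_add_one_mem_uIcc n.cast_nonneg (by linarith)))

theorem tendsto_sum_Ico_div (hf : AntitoneOn f (Ioc 0 1))
    (hint : IntervalIntegrable f volume 0 1) :
    Tendsto (fun n : ℕ => ∑ k ∈ Finset.Ico 1 n, f (k / n) / n) atTop
      (𝓝 (∫ t in (0 : ℝ)..1, f t)) := by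
  rw [← tendsto_add_atTop_iff_nat 1]
  push_cast
  have hint' : IntegrableOn f (uIcc 0 1) := (intervalIntegrable_iff').1 hint
  have hlim_lower : Tendsto (fun n : ℕ => ∫ t in (1 / (n + 1) : ℝ)..1, f t) atTop
      (𝓝 (∫ t in (0 : ℝ)..1, f t)) :=
    ((intervalIntegral.continuousOn_primitive_interval_left hint') 0
      left_mem_uIcc).tendsto.comp (tendsto_nhdsWithin_iff.2
        ⟨tendsto_one_div_add_atTop_nhds_zero_nat,
          Eventually.of_forall fun n => div_natCast_add_one_mem_uIcc zero_le_one (by simp)⟩)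
  have hlim_upper : Tendsto (fun n : ℕ => ∫ t in (0 : ℝ)..n / (n + 1), f t) atTop
      (𝓝 (∫ t in (0 : ℝ)..1, f t)) :=
    ((intervalIntegral.continuousOn_primitive_interval' hint left_mem_uIcc) 1
      right_mem_uIcc).tendsto.comp (tendsto_nhdsWithin_iff.2
        ⟨tendsto_natCast_div_add_atTop 1,
          Eventually.of_forall fun n => div_natCast_add_one_mem_uIcc n.cast_nonneg (by simp)⟩)
  exact tendsto_of_tendsto_of_tendsto_of_le_of_le hlim_lower hlim_upper
    hf.integral_le_sum_Ico_div_add_one (hf.sum_Ico_div_add_one_le_integral hint)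

theorem tendsto_dyadicRiemannSum (hf : AntitoneOn f (Ioc 0 1))
    (hint : IntervalIntegrable f volume 0 1) :
    Tendsto (dyadicRiemannSum f) atTop (𝓝 (∫ t in (0 : ℝ)..1, f t)) := by
  unfold dyadicRiemannSum
  have h := (hf.tendsto_sum_Ico_div hint).comp
    (tendsto_pow_atTop_atTop_of_one_lt (one_lt_two (α := ℕ)))
  simpa only [Function.comp_def, Nat.cast_pow, Nat.cast_ofNat] using h

end AntitoneOn

theorem stmt_11 (p : ℝ) (hp : 0 ≤ p) :
    ∃ S : ℝ,
      Filter.Tendsto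
        (fun N : ℕ => ∑ n ∈ Finset.Icc (1:ℕ) N, ∑ m ∈ Finset.Icc (1:ℕ) (2 ^ n - 1),
          (-1 : ℝ) ^ (m + 1) / 2 ^ n * Real.log ((2 : ℝ) ^ n / (m:ℝ)) ^ p)
        Filter.atTop (nhds S) ∧
      Real.Gamma (p + 1) = ∫ x in (0:ℝ)..1, Real.log (1 / x) ^ p ∧
      Real.Gamma (p + 1) = S := by
  have hp' : -1 < p := by linarith
  refine ⟨Gamma (p + 1), ?_, (integral_log_one_div_rpow hp').symm, rfl⟩
  have hpartial : (fun N : ℕ => ∑ n ∈ Finset.Icc (1:ℕ) N, ∑ m ∈ Finset.Icc (1:ℕ) (2 ^ n - 1),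
      (-1 : ℝ) ^ (m + 1) / 2 ^ n * log ((2 : ℝ) ^ n / (m:ℝ)) ^ p) =
      dyadicRiemannSum fun x => log (1 / x) ^ p := funext fun N => by
    simpa only [one_div_div] using
      sum_Icc_sum_Icc_neg_one_pow_div_two_pow_eq_dyadicRiemannSum (fun x => log (1 / x) ^ p) N
  rw [hpartial, ← integral_log_one_div_rpow hp']
  exact (antitoneOn_log_one_div_rpow hp).tendsto_dyadicRiemannSum
    (intervalIntegrable_log_one_div_rpow hp')
end
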